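/- arXiv:math/0603325 — 2 statements merged into one kernel-verified Lean document; each statement's English description precedes it below -/
import Mathlib

section
/- Let Q : ℝ → ℝ be differentiable with |Q'(s)| ≤ M and Q'(s) ≥ −L + δ for δ > 0, T_n > 0, and let R solve R(t) = T_n + Q(t − R(t))/L. Then R is differentiable with 1 − R'(t) = 1/(1 + Q'(t − R(t))/L), and hence |R'(t)| ≤ M/δ. -/
open Set

/-- Differentiating the implicit RTT equation `R t = T_n + Q(t − R t)/L`:
`R` is differentiable with `1 − R'(t) = 1/(1 + Q'(t − R t)/L)`, and the bounds
`|Q'| ≤ M`, `Q' ≥ −L + δ` give `|R'(t)| ≤ M/δ`. -/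
theorem rtt_derivative_formula
    (L δ M Tn : ℝ) (hL : 0 < L) (hδ : 0 < δ) (hM : 0 ≤ M) (hTn : 0 < Tn)
    (Q Q' R : ℝ → ℝ)
    (hQ : ∀ s, HasDerivAt Q (Q' s) s)
    (hQ'ub : ∀ s, |Q' s| ≤ M)
    (hQ'lb : ∀ s, -L + δ ≤ Q' s)
    (hR : ∀ t, R t = Tn + Q (t - R t) / L) :
    ∀ t : ℝ, ∃ r : ℝ, HasDerivAt R r t ∧
      1 - r = 1 / (1 + Q' (t - R t) / L) ∧ |r| ≤ M / δ := by
  set φ : ℝ → ℝ := fun u => u + Tn + Q u / L with hφdef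
  have hφ' : ∀ s, HasDerivAt φ (1 + Q' s / L) s := by
    intro s
    have := ((hasDerivAt_id s).add_const Tn).add ((hQ s).div_const L)
    simp at this; exact this
  have hge : ∀ s, δ / L ≤ 1 + Q' s / L := by
    intro s
    have h2 : (-L + δ) / L ≤ Q' s / L := div_le_div_of_nonneg_right (hQ'lb s) hL.le
    have h3 : (-L + δ) / L = -1 + δ / L := by field_simp
    linarith [h2, h3 ▸ h2]
  have hpos : ∀ s, 0 < 1 + Q' s / L := fun s =>
    lt_of_lt_of_le (div_pos hδ hL) (hge s)
  have hφmono : StrictMono φ := strictMono_of_hasDerivAt_pos hφ' hpos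
  -- g y = y - R y is a two-sided inverse of φ
  set g : ℝ → ℝ := fun y => y - R y with hgdef
  have hφg : ∀ y, φ (g y) = y := by
    intro y
    have := hR y
    simp only [hφdef, hgdef]
    linarith [hR y]
  have hgmono : StrictMono g := by
    intro a b hab
    have := hφmono.lt_iff_lt (a := g a) (b := g b)
    rw [hφg, hφg] at this
    exact this.mp hab
  have hgsurj : Function.Surjective g := by
    intro x
    refine ⟨φ x, ?_⟩
    have : φ (g (φ x)) = φ x := hφg (φ x)
    exact hφmono.injective this
  have hgcont : Continuous g := hgmono.monotone.continuous_of_surjective hgsurj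
  intro t
  set u := t - R t with hu
  have hgt : g t = u := rfl
  have hgderiv : HasDerivAt g (1 + Q' u / L)⁻¹ t := by
    apply HasDerivAt.of_local_left_inverse hgcont.continuousAt
      (f := φ) (by rw [hgt]; exact hφ' u) (ne_of_gt (hpos u))
    filter_upwards with y using hφg y
  have hRderiv : HasDerivAt R (1 - (1 + Q' u / L)⁻¹) t := by
    have := (hasDerivAt_id t).sub hgderiv
    have hRy : R = fun y => y - g y := by funext y; simp [hgdef]
    rw [hRy]
    exact this
  refine ⟨1 - (1 + Q' u / L)⁻¹, hRderiv, by rw [one_div]; ring, ?_⟩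
  have hLQ : δ ≤ L + Q' u := by linarith [hQ'lb u]
  have hden : 1 + Q' u / L = (L + Q' u) / L := by field_simp
  have hval : 1 - (1 + Q' u / L)⁻¹ = Q' u / (L + Q' u) := by
    have hne : L + Q' u ≠ 0 := ne_of_gt (lt_of_lt_of_le hδ hLQ)
    rw [hden]
    field_simp
    ring
  rw [hval, abs_div, abs_of_pos (lt_of_lt_of_le hδ hLQ)]
  apply div_le_div₀ hM (hQ'ub u) hδ hLQ
end

section
/- With the setup of the previous ODE, as c → ∞ (with S continuous, S(u) ≥ S_min > 0, and t > ρ fixed), V(t) converges to L/S(t). -/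
open Real intervalIntegral Set Filter MeasureTheory

private lemma exp_neg_mul_tendsto {A : ℝ} (hA : 0 < A) :
    Tendsto (fun c : ℝ => Real.exp (-(c * A))) atTop (nhds 0) := by
  have h1 : Tendsto (fun c : ℝ => c * A) atTop atTop :=
    Tendsto.atTop_mul_const hA tendsto_id
  exact Real.tendsto_exp_atBot.comp (tendsto_neg_atBot_iff.mpr h1)

private lemma mul_exp_neg_mul_tendsto {B : ℝ} (hB : 0 < B) :
    Tendsto (fun c : ℝ => c * Real.exp (-(c * B))) atTop (nhds 0) := by
  have h1 : Tendsto (fun c : ℝ => c * B) atTop atTop :=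
    Tendsto.atTop_mul_const hB tendsto_id
  have h2 : Tendsto (fun x : ℝ => x ^ 1 * Real.exp (-x)) atTop (nhds 0) :=
    Real.tendsto_pow_mul_exp_neg_atTop_nhds_zero 1
  have h3 : Tendsto (fun c : ℝ => (c * B) ^ 1 * Real.exp (-(c * B))) atTop (nhds 0) :=
    h2.comp h1
  have h4 := h3.const_mul (1 / B)
  rw [mul_zero] at h4
  refine h4.congr (fun c => ?_)
  field_simp

/-- Limit `δ → 0` of Gentle RED: as `c → ∞`, the variation-of-constants solution
`V_c(t) = (1−p_max) e^{−c∫_ρ^t S} + ∫_ρ^t L c e^{−c∫_u^t S} du` converges to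
`L / S(t)` (for `t > ρ`, `S` continuous and bounded below by `S_min > 0`). -/
theorem gentle_red_limit
    (ρ t L pmax Smin : ℝ)
    (hρt : ρ < t) (hL : 0 < L)
    (hpmax : pmax ∈ Set.Ico (0:ℝ) 1) (hSmin : 0 < Smin)
    (S : ℝ → ℝ)
    (hScont : Continuous S)
    (hSlb : ∀ u, Smin ≤ S u) :
    Filter.Tendsto
      (fun c : ℝ =>
        (1 - pmax) * Real.exp (-c * ∫ u in ρ..t, S u) +
          ∫ u in ρ..t, L * c * Real.exp (-c * ∫ s in u..t, S s))
      Filter.atTop (nhds (L / S t)) := by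
  have hSpos : ∀ u, 0 < S u := fun u => lt_of_lt_of_le hSmin (hSlb u)
  set F : ℝ → ℝ := fun u => ∫ s in u..t, S s with hF
  -- derivative of F
  have hFderiv : ∀ x, HasDerivAt F (-(S x)) x := by
    intro x
    have h1 : HasDerivAt (fun u => ∫ s in t..u, S s) (S x) x :=
      intervalIntegral.integral_hasDerivAt_right (hScont.intervalIntegrable t x)
        (hScont.stronglyMeasurableAtFilter _ _) hScont.continuousAt
    have h2 := h1.neg
    refine h2.congr_deriv rfl |>.congr_of_eventuallyEq ?_
    filter_upwards with u
    simp [hF, intervalIntegral.integral_symm t u]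
  have hFcont : Continuous F :=
    continuous_iff_continuousAt.mpr fun x => (hFderiv x).continuousAt
  -- lower bound on F
  have hFlb : ∀ x, x ≤ t → Smin * (t - x) ≤ F x := by
    intro x hx
    have h1 : ∫ s in x..t, Smin ≤ ∫ s in x..t, S s :=
      intervalIntegral.integral_mono_on hx (intervalIntegrable_const)
        (hScont.intervalIntegrable x t) (fun u _ => hSlb u)
    simpa [mul_comm] using h1
  have hFρ : 0 < F ρ :=
    lt_of_lt_of_le (mul_pos hSmin (by linarith)) (hFlb ρ hρt.le)
  -- pointwise derivative of the exponential antiderivative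
  have hexpderiv : ∀ (c : ℝ) (x : ℝ),
      HasDerivAt (fun u => Real.exp (-(c * F u))) (c * S x * Real.exp (-(c * F x))) x := by
    intro c x
    have h1 : HasDerivAt (fun u => -(c * F u)) (c * S x) x := by
      have := ((hFderiv x).const_mul c).neg
      exact (by simpa [mul_comm, mul_neg] using this : HasDerivAt (-fun y => c * F y) (c * S x) x)
    have := h1.exp
    simpa [mul_comm] using this
  set φ : ℝ → ℝ → ℝ := fun c x => c * S x * Real.exp (-(c * F x)) with hφ
  have hφcont : ∀ c, Continuous (φ c) := by
    intro c
    exact (continuous_const.mul hScont).mul ((continuous_const.mul hFcont).neg.rexp : Continuous fun u => Real.exp (-(c * F u)))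
  -- FTC: integral of the peak function
  have hInt : ∀ c : ℝ, (∫ x in ρ..t, φ c x) = 1 - Real.exp (-(c * F ρ)) := by
    intro c
    rw [intervalIntegral.integral_eq_sub_of_hasDerivAt
      (fun x _ => hexpderiv c x) ((hφcont c).intervalIntegrable ρ t)]
    simp [hF]
  -- first term tends to 0
  have hterm1 : Tendsto (fun c : ℝ => (1 - pmax) * Real.exp (-c * ∫ u in ρ..t, S u))
      atTop (nhds 0) := by
    have h1 := (exp_neg_mul_tendsto hFρ).const_mul (1 - pmax)
    rw [mul_zero] at h1
    refine h1.congr (fun c => ?_)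
    simp [hF, neg_mul]
  -- second term tends to L / S t via the peak function theorem
  set g : ℝ → ℝ := fun x => L / S x with hg
  have hgcont : Continuous g := continuous_const.div hScont (fun x => (hSpos x).ne')
  have hterm2 : Tendsto (fun c : ℝ => ∫ x in Icc ρ t, φ c x • g x) atTop (nhds (L / S t)) := by
    apply tendsto_setIntegral_peak_smul_of_integrableOn_of_tendsto
      (measurableSet_Icc) (measurableSet_Icc) (subset_refl _) (self_mem_nhdsWithin)
      (by simp : (volume (Icc ρ t)) ≠ ⊤)
    · -- nonnegativity
      filter_upwards [eventually_ge_atTop (0:ℝ)] with c hc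
      intro x _
      exact mul_nonneg (mul_nonneg hc (hSpos x).le) (Real.exp_pos _).le
    · -- uniform convergence to 0 away from t
      intro u hu hut
      obtain ⟨δ, hδ, hball⟩ := Metric.isOpen_iff.mp hu t hut
      obtain ⟨M, hM⟩ := isCompact_Icc.exists_bound_of_continuousOn
        (hScont.continuousOn : ContinuousOn S (Icc ρ t))
      have hM0 : 0 < M := lt_of_lt_of_le (lt_of_lt_of_le hSmin (hSlb ρ))
        (le_trans (le_abs_self _) (by simpa using hM ρ ⟨le_refl ρ, hρt.le⟩))
      rw [Metric.tendstoUniformlyOn_iff]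
      intro ε hε
      have haux := (mul_exp_neg_mul_tendsto (mul_pos hSmin hδ)).const_mul M
      rw [mul_zero] at haux
      have haux2 : ∀ᶠ c in atTop, M * (c * Real.exp (-(c * (Smin * δ)))) < ε :=
        haux.eventually (eventually_lt_nhds hε) |>.mono (fun c hc => by
          simpa using hc)
      filter_upwards [eventually_ge_atTop (0:ℝ), haux2] with c hc hlt
      intro x hx
      obtain ⟨⟨hx1, hx2⟩, hxu⟩ := hx
      have hdist : δ ≤ t - x := by
        by_contra h
        push_neg at h
        apply hxu
        apply hball
        rw [Metric.mem_ball, Real.dist_eq, abs_lt]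
        constructor <;> linarith
      have hFx : Smin * δ ≤ F x :=
        le_trans (by nlinarith) (hFlb x hx2)
      have hφle : φ c x ≤ M * (c * Real.exp (-(c * (Smin * δ)))) := by
        have hexp : Real.exp (-(c * F x)) ≤ Real.exp (-(c * (Smin * δ))) := by
          apply Real.exp_le_exp.mpr
          nlinarith
        have hSx : S x ≤ M := le_trans (le_abs_self _) (hM x ⟨hx1, hx2⟩)
        have := mul_le_mul (mul_le_mul le_rfl hSx (hSpos x).le hc)
          hexp (Real.exp_pos _).le (by nlinarith [hc, hM0.le])
        calc φ c x = c * S x * Real.exp (-(c * F x)) := rfl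
          _ ≤ c * M * Real.exp (-(c * (Smin * δ))) := this
          _ = M * (c * Real.exp (-(c * (Smin * δ)))) := by ring
      have hφnn : 0 ≤ φ c x :=
        mul_nonneg (mul_nonneg hc (hSpos x).le) (Real.exp_pos _).le
      simp only [Pi.zero_apply, Real.dist_eq]
      rw [abs_sub_comm, sub_zero, abs_of_nonneg hφnn]
      exact lt_of_le_of_lt hφle hlt
    · -- integral → 1
      have heq : ∀ c : ℝ, (∫ x in Icc ρ t, φ c x) = 1 - Real.exp (-(c * F ρ)) := by
        intro c
        rw [MeasureTheory.integral_Icc_eq_integral_Ioc,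
          ← intervalIntegral.integral_of_le hρt.le]
        exact hInt c
      have h1 := (exp_neg_mul_tendsto hFρ).const_sub 1
      rw [sub_zero] at h1
      exact h1.congr (fun c => (heq c).symm)
    · -- measurability
      filter_upwards with c
      exact ((hφcont c).aestronglyMeasurable).restrict
    · -- integrability of g
      exact hgcont.integrableOn_Icc
    · -- limit of g at t within Icc
      exact (hgcont.tendsto t).mono_left nhdsWithin_le_nhds
  -- convert the peak integral to the interval integral
  have heq2 : ∀ c : ℝ, (∫ x in Icc ρ t, φ c x • g x)
      = ∫ u in ρ..t, L * c * Real.exp (-c * ∫ s in u..t, S s) := by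
    intro c
    rw [intervalIntegral.integral_of_le hρt.le, ← MeasureTheory.integral_Icc_eq_integral_Ioc]
    congr 1
    funext x
    have hx0 : S x ≠ 0 := (hSpos x).ne'
    simp only [hφ, hg, smul_eq_mul, hF, neg_mul]
    field_simp
  have := hterm1.add (hterm2.congr heq2)
  simpa using this
end
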